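/- arXiv:1502.03968 — 3 statements merged into one kernel-verified Lean document; each statement's English description precedes it below -/
import Mathlib

section
/- Let 1 < p < N be real numbers and let 0 ≤ μ < ((N-p)/p)^p. Define g(γ) = (p-1)γ^p - (N-p)γ^{p-1} + μ for γ ≥ 0. Then g has exactly two nonnegative roots γ₁ < γ₂, and they satisfy 0 ≤ γ₁ < (N-p)/p < γ₂ ≤ (N-p)/(p-1). -/
/-!
Since `g' γ = (p - 1) γ ^ (p - 2) (p γ - (N - p))`, the function `g` strictly decreases on
`[0, (N - p) / p]` and strictly increases afterwards. It is `μ ≥ 0` at `0` and at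
`(N - p) / (p - 1)` (where the factorisation `g γ = γ ^ (p - 1) ((p - 1) γ - (N - p)) + μ`
kills the first term), and `μ - ((N - p) / p) ^ p < 0` at the turning point, so the
intermediate value theorem gives one zero on each side and strict monotonicity makes each unique.
-/

open Set Real

theorem exists_two_zeros_of_strictAntiOn_of_strictMonoOn {f : ℝ → ℝ} {a m M : ℝ}
    (ham : a ≤ m) (hmM : m ≤ M) (hf : ContinuousOn f (Icc a M))
    (h_anti : StrictAntiOn f (Icc a m)) (h_mono : StrictMonoOn f (Ici m))
    (ha : 0 ≤ f a) (hm : f m < 0) (hM : 0 ≤ f M) :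
    ∃ γ₁ γ₂ : ℝ, a ≤ γ₁ ∧ γ₁ < m ∧ m < γ₂ ∧ γ₂ ≤ M ∧ f γ₁ = 0 ∧ f γ₂ = 0 ∧
      ∀ γ, a ≤ γ → f γ = 0 → γ = γ₁ ∨ γ = γ₂ := by
  obtain ⟨γ₁, ⟨haγ₁, hγ₁m⟩, hγ₁⟩ : (0 : ℝ) ∈ f '' Icc a m :=
    intermediate_value_Icc' ham (hf.mono (Icc_subset_Icc_right hmM)) ⟨hm.le, ha⟩
  obtain ⟨γ₂, ⟨hmγ₂, hγ₂M⟩, hγ₂⟩ : (0 : ℝ) ∈ f '' Icc m M :=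
    intermediate_value_Icc hmM (hf.mono (Icc_subset_Icc_left ham)) ⟨hm.le, hM⟩
  have hγ₁m' : γ₁ < m := hγ₁m.lt_of_ne (by rintro rfl; linarith)
  have hmγ₂' : m < γ₂ := hmγ₂.lt_of_ne (by rintro rfl; linarith)
  refine ⟨γ₁, γ₂, haγ₁, hγ₁m', hmγ₂', hγ₂M, hγ₁, hγ₂, fun γ haγ hγ => ?_⟩
  rcases le_or_gt γ m with hγm | hmγ
  · exact .inl (h_anti.injOn ⟨haγ, hγm⟩ ⟨haγ₁, hγ₁m⟩ (hγ.trans hγ₁.symm))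
  · exact .inr (h_mono.injOn hmγ.le hmγ₂ (hγ.trans hγ₂.symm))

namespace Indicial

noncomputable def g (N p μ γ : ℝ) : ℝ := (p - 1) * γ ^ p - (N - p) * γ ^ (p - 1) + μ

variable {N p μ : ℝ}

theorem g_zero (hp : 1 < p) : g N p μ 0 = μ := by
  simp [g, zero_rpow (by linarith : p ≠ 0), zero_rpow (by linarith : p - 1 ≠ 0)]

theorem g_eq_of_pos {γ : ℝ} (hγ : 0 < γ) :
    g N p μ γ = γ ^ (p - 1) * ((p - 1) * γ - (N - p)) + μ := by
  rw [g, rpow_sub_one hγ.ne']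
  field_simp

theorem continuous_g (hp : 1 ≤ p) : Continuous (g N p μ) := by
  have hp' : 0 ≤ p - 1 := by linarith
  unfold g
  fun_prop (disch := first | exact hp' | linarith)

theorem hasDerivAt_g {x : ℝ} (hx : 0 < x) :
    HasDerivAt (g N p μ) ((p - 1) * x ^ (p - 2) * (p * x - (N - p))) x := by
  have hpow (q : ℝ) : HasDerivAt (fun y : ℝ => y ^ q) (q * x ^ (q - 1)) x :=
    hasDerivAt_rpow_const (.inl hx.ne')
  refine ((((hpow p).const_mul (p - 1)).sub ((hpow (p - 1)).const_mul (N - p))).add_const μ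
    ).congr_deriv ?_
  have hx_pow : x ^ (p - 1) = x ^ (p - 2) * x := by rw [← rpow_add_one hx.ne']; ring_nf
  rw [show p - 1 - 1 = p - 2 by ring, hx_pow]
  ring

theorem g_div_p (hp : 0 < p) (hpN : p < N) :
    g N p μ ((N - p) / p) = μ - ((N - p) / p) ^ p := by
  set m := (N - p) / p
  have hm : 0 < m := div_pos (by linarith) hp
  have hNp : N - p = p * m := (mul_div_cancel₀ _ hp.ne').symm
  rw [g_eq_of_pos hm, hNp, rpow_sub_one hm.ne']
  field_simp
  ring

theorem g_div_p_sub_one (hp : 1 < p) (hpN : p < N) : g N p μ ((N - p) / (p - 1)) = μ := by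
  rw [g_eq_of_pos (div_pos (by linarith) (by linarith)), mul_div_cancel₀ _ (by linarith), sub_self,
    mul_zero, zero_add]

theorem strictAntiOn_g (hp : 1 < p) : StrictAntiOn (g N p μ) (Icc 0 ((N - p) / p)) := by
  refine strictAntiOn_of_deriv_neg (convex_Icc _ _) (continuous_g hp.le).continuousOn ?_
  rw [interior_Icc]
  rintro x ⟨hx, hxm⟩
  rw [(hasDerivAt_g hx).deriv]
  have h_neg : p * x - (N - p) < 0 := by
    rw [lt_div_iff₀ (by linarith)] at hxm
    linarith
  have := rpow_pos_of_pos hx (p - 2)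
  have : 0 < p - 1 := by linarith
  exact mul_neg_of_pos_of_neg (by positivity) h_neg

theorem strictMonoOn_g (hp : 1 < p) (hpN : p ≤ N) :
    StrictMonoOn (g N p μ) (Ici ((N - p) / p)) := by
  refine strictMonoOn_of_deriv_pos (convex_Ici _) (continuous_g hp.le).continuousOn ?_
  intro x hmx
  rw [interior_Ici] at hmx
  have hx : 0 < x := lt_of_le_of_lt (div_nonneg (by linarith) (by linarith)) hmx
  rw [(hasDerivAt_g hx).deriv]
  have : 0 < p * x - (N - p) := by
    rw [mem_Ioi, div_lt_iff₀ (by linarith)] at hmx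
    linarith
  have := rpow_pos_of_pos hx (p - 2)
  have : 0 < p - 1 := by linarith
  positivity

end Indicial

open Indicial in
/-- For 1 < p < N and 0 ≤ μ < ((N-p)/p)^p, the function
g(γ) = (p-1)γ^p - (N-p)γ^{p-1} + μ has exactly two nonnegative roots
γ₁ < γ₂, with 0 ≤ γ₁ < (N-p)/p < γ₂ ≤ (N-p)/(p-1). -/
theorem stmt0 (N p μ : ℝ) (hp : 1 < p) (hpN : p < N) (hμ0 : 0 ≤ μ)
    (hμ : μ < ((N - p) / p) ^ p) :
    ∃ γ₁ γ₂ : ℝ, 0 ≤ γ₁ ∧ γ₁ < γ₂ ∧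
      (p - 1) * γ₁ ^ p - (N - p) * γ₁ ^ (p - 1) + μ = 0 ∧
      (p - 1) * γ₂ ^ p - (N - p) * γ₂ ^ (p - 1) + μ = 0 ∧
      (∀ γ : ℝ, 0 ≤ γ → (p - 1) * γ ^ p - (N - p) * γ ^ (p - 1) + μ = 0 →
        γ = γ₁ ∨ γ = γ₂) ∧
      γ₁ < (N - p) / p ∧ (N - p) / p < γ₂ ∧ γ₂ ≤ (N - p) / (p - 1) := by
  have hm : 0 ≤ (N - p) / p := div_nonneg (by linarith) (by linarith)
  have hmM : (N - p) / p ≤ (N - p) / (p - 1) :=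
    div_le_div_of_nonneg_left (by linarith) (by linarith) (by linarith)
  obtain ⟨γ₁, γ₂, h0γ₁, hγ₁m, hmγ₂, hγ₂M, hγ₁, hγ₂, h_unique⟩ :=
    exists_two_zeros_of_strictAntiOn_of_strictMonoOn (f := g N p μ) hm hmM
      (continuous_g hp.le).continuousOn (strictAntiOn_g hp) (strictMonoOn_g hp hpN.le)
      (by rwa [g_zero hp])
      (by rw [g_div_p (by linarith) hpN]; linarith) (by rw [g_div_p_sub_one hp hpN]; exact hμ0)
  exact ⟨γ₁, γ₂, h0γ₁, hγ₁m.trans hmγ₂, hγ₁, hγ₂, h_unique, hγ₁m, hmγ₂, hγ₂M⟩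
end

section
/- Let N ≥ 3, 0 < μ < μ̄ = ((N-2)/2)², and define u₀(x) = (4N(μ̄-μ)/(N-2))^((N-2)/4) · (|x|^((√μ̄ - √(μ̄-μ))/√μ̄) + |x|^((√μ̄ + √(μ̄-μ))/√μ̄))^(-(N-2)/2) for x ≠ 0. Then there exist constants C₁, C₂ > 0 depending only on N and μ such that |∇u₀(x)|·|x|^(√μ̄ - √(μ̄-μ) + 1) → C₁ as |x| → 0 and |∇u₀(x)|·|x|^(√μ̄ + √(μ̄-μ) + 1) → C₂ as |x| → ∞. -/
/-!
Write `u₀ x = φ ‖x‖` with `φ r = A (r ^ a + r ^ b) ^ (-p)`, where `p = (N - 2) / 2 = √μ̄`,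
`a = (p - s) / p < b = (p + s) / p` and `s = √(μ̄ - μ)`, so that `p a = √μ̄ - √(μ̄ - μ)` and
`p b = √μ̄ + √(μ̄ - μ)`. For a radial function `‖∇u₀ x‖ = |φ' ‖x‖|`. Factoring `r ^ a` out of
`r ^ a + r ^ b` gives
`|φ' r| r ^ (p a + 1) = A p (1 + r ^ (b - a)) ^ (-(p + 1)) (a + b r ^ (b - a))`,
which tends to `A p a` as `r → 0`; factoring out `r ^ b` instead gives the limit `A p b`
as `r → ∞`.
-/

open Filter Real Topology

section Radial

variable {E : Type*} [NormedAddCommGroup E] [InnerProductSpace ℝ E] [CompleteSpace E]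

theorem hasGradientAt_norm {x : E} (hx : x ≠ 0) : HasGradientAt (‖·‖) (‖x‖⁻¹ • x) x := by
  have h := (hasStrictFDerivAt_norm_sq x).hasFDerivAt.sqrt (by positivity)
  simp only [sqrt_sq (norm_nonneg _)] at h
  refine hasGradientAt_iff_hasFDerivAt.mpr (h.congr_fderiv ?_)
  ext v
  simp only [InnerProductSpace.toDual_apply_apply, real_inner_smul_left, smul_apply,
    coe_innerSL_apply, nsmul_eq_mul, Nat.cast_ofNat, smul_eq_mul]
  field_simp

theorem HasDerivAt.hasGradientAt_comp_norm {f : ℝ → ℝ} {f' : ℝ} {x : E} (hx : x ≠ 0)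
    (hf : HasDerivAt f f' ‖x‖) : HasGradientAt (fun y => f ‖y‖) ((f' / ‖x‖) • x) x := by
  have h := hf.comp_hasFDerivAt x ((hasGradientAt_iff_hasFDerivAt.mp (hasGradientAt_norm hx)))
  refine hasGradientAt_iff_hasFDerivAt.mpr (h.congr_fderiv ?_)
  rw [div_eq_mul_inv, mul_smul, map_smul, map_smul, map_smul]

theorem norm_gradient_comp_norm {f : ℝ → ℝ} {f' : ℝ} {x : E} (hx : x ≠ 0)
    (hf : HasDerivAt f f' ‖x‖) : ‖gradient (fun y => f ‖y‖) x‖ = |f'| := by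
  rw [(hf.hasGradientAt_comp_norm hx).gradient, norm_smul, norm_div, norm_norm, Real.norm_eq_abs,
    div_mul_cancel₀ _ (norm_ne_zero_iff.mpr hx)]

end Radial

/-- `-φ' r / (A p)` for the profile `φ r = A (r ^ a + r ^ b) ^ (-p)`. -/
noncomputable def profileSlope (p a b r : ℝ) : ℝ :=
  (r ^ a + r ^ b) ^ (-(p + 1)) * (a * r ^ (a - 1) + b * r ^ (b - 1))

section Profile

variable {p a b r : ℝ}

lemma profileSlope_comm : profileSlope p a b r = profileSlope p b a r := by
  simp only [profileSlope, add_comm]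

lemma profileSlope_nonneg (ha : 0 ≤ a) (hb : 0 ≤ b) (hr : 0 ≤ r) : 0 ≤ profileSlope p a b r := by
  unfold profileSlope; positivity

lemma hasDerivAt_profile (A : ℝ) (hr : 0 < r) :
    HasDerivAt (fun t => A * (t ^ a + t ^ b) ^ (-p)) (-(A * p * profileSlope p a b r)) r := by
  have hsum : 0 < r ^ a + r ^ b := by positivity
  have h := (((hasDerivAt_rpow_const (p := a) (Or.inl hr.ne')).add
    (hasDerivAt_rpow_const (p := b) (Or.inl hr.ne'))).rpow_const
    (p := -p) (Or.inl hsum.ne')).const_mul A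
  simp only [Pi.add_apply] at h
  refine h.congr_deriv ?_
  rw [profileSlope, show -p - 1 = -(p + 1) by ring]
  ring

lemma profileSlope_mul_rpow (hr : 0 < r) :
    profileSlope p a b r * r ^ (p * a + 1) =
      (1 + r ^ (b - a)) ^ (-(p + 1)) * (a + b * r ^ (b - a)) := by
  have hb : r ^ b = r ^ a * r ^ (b - a) := by rw [← rpow_add hr]; ring_nf
  have hb1 : r ^ (b - 1) = r ^ (a - 1) * r ^ (b - a) := by rw [← rpow_add hr]; ring_nf
  have hcancel : r ^ (a * -(p + 1)) * r ^ (a - 1) * r ^ (p * a + 1) = 1 := by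
    rw [← rpow_add hr, ← rpow_add hr, show a * -(p + 1) + (a - 1) + (p * a + 1) = 0 by ring,
      rpow_zero]
  rw [profileSlope, hb, hb1, show r ^ a + r ^ a * r ^ (b - a) = r ^ a * (1 + r ^ (b - a)) by ring,
    mul_rpow (by positivity) (by positivity), ← rpow_mul hr.le]
  linear_combination ((1 + r ^ (b - a)) ^ (-(p + 1)) * (a + b * r ^ (b - a))) * hcancel

lemma tendsto_profileSlope_mul_rpow {l : Filter ℝ} (hl : ∀ᶠ r in l, 0 < r)
    (h : Tendsto (fun r => r ^ (b - a)) l (𝓝 0)) :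
    Tendsto (fun r => profileSlope p a b r * r ^ (p * a + 1)) l (𝓝 a) := by
  have hcont : ContinuousAt (fun t : ℝ => (1 + t) ^ (-(p + 1)) * (a + b * t)) 0 :=
    ((continuousAt_const.add continuousAt_id).rpow_const (Or.inl (by norm_num))).mul
      (by fun_prop)
  have hlim := hcont.tendsto.comp h
  simp only [add_zero, one_rpow, mul_zero, one_mul] at hlim
  refine hlim.congr' ?_
  filter_upwards [hl] with r hr
  exact (profileSlope_mul_rpow hr).symm

end Profile

section RadialProfile

variable {E : Type*} [NormedAddCommGroup E] [InnerProductSpace ℝ E] [CompleteSpace E] {A p a b : ℝ}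

lemma norm_gradient_profile (hA : 0 ≤ A) (hp : 0 ≤ p) (ha : 0 ≤ a) (hb : 0 ≤ b) {x : E}
    (hx : x ≠ 0) :
    ‖gradient (fun y : E => A * (‖y‖ ^ a + ‖y‖ ^ b) ^ (-p)) x‖ =
      A * p * profileSlope p a b ‖x‖ := by
  refine (norm_gradient_comp_norm hx (hasDerivAt_profile A (norm_pos_iff.mpr hx))).trans ?_
  have := profileSlope_nonneg (p := p) ha hb (norm_nonneg x)
  rw [abs_neg, abs_of_nonneg (by positivity)]

lemma tendsto_norm_gradient_profile_mul_rpow_nhdsNE (hA : 0 ≤ A) (hp : 0 ≤ p) (ha : 0 ≤ a)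
    (hab : a < b) :
    Tendsto (fun x : E => ‖gradient (fun y : E => A * (‖y‖ ^ a + ‖y‖ ^ b) ^ (-p)) x‖ *
      ‖x‖ ^ (p * a + 1)) (𝓝[≠] 0) (𝓝 (A * p * a)) := by
  have hpow : Tendsto (fun r : ℝ => r ^ (b - a)) (𝓝[>] 0) (𝓝 0) := by
    have := (continuousAt_rpow_const 0 (b - a) (Or.inr (sub_pos.2 hab).le)).tendsto
    rw [zero_rpow (sub_pos.2 hab).ne'] at this
    exact this.mono_left nhdsWithin_le_nhds
  have hlim := ((tendsto_profileSlope_mul_rpow (p := p) self_mem_nhdsWithin hpow).const_mul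
    (A * p)).comp (tendsto_norm_nhdsNE_zero (E := E))
  refine hlim.congr' ?_
  filter_upwards [self_mem_nhdsWithin] with x hx
  rw [Function.comp_apply, norm_gradient_profile hA hp ha (ha.trans hab.le) hx, ← mul_assoc]

lemma tendsto_norm_gradient_profile_mul_rpow_atTop (hA : 0 ≤ A) (hp : 0 ≤ p) (ha : 0 ≤ a)
    (hab : a < b) :
    Tendsto (fun x : E => ‖gradient (fun y : E => A * (‖y‖ ^ a + ‖y‖ ^ b) ^ (-p)) x‖ *
      ‖x‖ ^ (p * b + 1)) (comap (‖·‖) atTop) (𝓝 (A * p * b)) := by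
  have hpow : Tendsto (fun r : ℝ => r ^ (a - b)) atTop (𝓝 0) := by
    simpa using tendsto_rpow_neg_atTop (sub_pos.2 hab)
  have hlim := ((tendsto_profileSlope_mul_rpow (p := p) (eventually_gt_atTop 0) hpow).const_mul
    (A * p)).comp (tendsto_comap (f := (‖·‖ : E → ℝ)))
  refine hlim.congr' ?_
  filter_upwards [tendsto_comap.eventually (eventually_gt_atTop 0)] with x hx
  rw [Function.comp_apply, norm_gradient_profile hA hp ha (ha.trans hab.le) (norm_pos_iff.mp hx),
    profileSlope_comm, ← mul_assoc]

end RadialProfile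

/-- For N ≥ 3, 0 < μ < μ̄ = ((N-2)/2)² and the explicit radial
solution u₀, there are constants C₁, C₂ > 0 (depending only on N, μ) with
|∇u₀(x)||x|^{√μ̄-√(μ̄-μ)+1} → C₁ as |x| → 0 and
|∇u₀(x)||x|^{√μ̄+√(μ̄-μ)+1} → C₂ as |x| → ∞. -/
theorem stmt7 (N : ℕ) (hN : 3 ≤ N) (μ μb : ℝ)
    (hμb : μb = (((N : ℝ) - 2) / 2) ^ 2) (hμ0 : 0 < μ) (hμ : μ < μb)
    (u₀ : EuclideanSpace ℝ (Fin N) → ℝ)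
    (hu : u₀ = fun x => (4 * (N : ℝ) * (μb - μ) / ((N : ℝ) - 2)) ^ (((N : ℝ) - 2) / 4) *
      (‖x‖ ^ ((Real.sqrt μb - Real.sqrt (μb - μ)) / Real.sqrt μb) +
        ‖x‖ ^ ((Real.sqrt μb + Real.sqrt (μb - μ)) / Real.sqrt μb)) ^
          (-(((N : ℝ) - 2) / 2))) :
    ∃ C₁ C₂ : ℝ, 0 < C₁ ∧ 0 < C₂ ∧
      Filter.Tendsto
        (fun x => ‖gradient u₀ x‖ * ‖x‖ ^ (Real.sqrt μb - Real.sqrt (μb - μ) + 1))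
        (nhdsWithin 0 {(0 : EuclideanSpace ℝ (Fin N))}ᶜ) (nhds C₁) ∧
      Filter.Tendsto
        (fun x => ‖gradient u₀ x‖ * ‖x‖ ^ (Real.sqrt μb + Real.sqrt (μb - μ) + 1))
        (Filter.comap (fun x : EuclideanSpace ℝ (Fin N) => ‖x‖) Filter.atTop)
        (nhds C₂) := by
  have hN' : (3 : ℝ) ≤ N := by exact_mod_cast hN
  have hA : 0 < (4 * (N : ℝ) * (μb - μ) / ((N : ℝ) - 2)) ^ (((N : ℝ) - 2) / 4) :=
    rpow_pos_of_pos (div_pos (by nlinarith) (by linarith)) _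
  have hp : 0 < ((N : ℝ) - 2) / 2 := by linarith
  set A := (4 * (N : ℝ) * (μb - μ) / ((N : ℝ) - 2)) ^ (((N : ℝ) - 2) / 4)
  set p := ((N : ℝ) - 2) / 2
  set s := √(μb - μ)
  have hs : 0 < s := sqrt_pos.2 (sub_pos.2 hμ)
  have hsqrt : √μb = p := by rw [hμb, sqrt_sq hp.le]
  have hsp : s < p := by
    rw [← hsqrt]; exact sqrt_lt_sqrt (sub_pos.2 hμ).le (by linarith)
  have ha : 0 < (p - s) / p := div_pos (sub_pos.2 hsp) hp
  have hab : (p - s) / p < (p + s) / p := div_lt_div_of_pos_right (by linarith) hp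
  have hpa : p * ((p - s) / p) = p - s := mul_div_cancel₀ _ hp.ne'
  have hpb : p * ((p + s) / p) = p + s := mul_div_cancel₀ _ hp.ne'
  rw [hsqrt] at hu ⊢
  subst hu
  refine ⟨A * p * ((p - s) / p), A * p * ((p + s) / p), by positivity,
    by have := ha.trans hab; positivity, ?_, ?_⟩
  · simpa only [hpa] using tendsto_norm_gradient_profile_mul_rpow_nhdsNE
      (E := EuclideanSpace ℝ (Fin N)) hA.le hp.le ha.le hab
  · simpa only [hpb] using tendsto_norm_gradient_profile_mul_rpow_atTop
      (E := EuclideanSpace ℝ (Fin N)) hA.le hp.le ha.le hab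
end

section
/- Let β ∈ (0,1), A > 0, c > 1, and let M_i be a sequence of nonnegative reals with M_i ≤ c^i · A · M_{i+1}^(1-β) for all i ≥ 0, and suppose M_i is bounded. Then M₀ ≤ C · A^(1/β) for a constant C depending only on c and β. -/
/-!
Put `D i = c ^ ((1 - β) / β ^ 2 + i / β) * A ^ (1 / β)`, the solution of the recursion with
equality, `D i = c ^ i * A * D (i + 1) ^ (1 - β)`. The normalized sequence `N i = M i / D i` then
satisfies `N i ≤ N (i + 1) ^ (1 - β)`, hence `N 0 ≤ N n ^ ((1 - β) ^ n)` for every `n`; since `D`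
is increasing, `N` is bounded, and letting `n → ∞` gives `N 0 ≤ 1`, i.e. `M 0 ≤ D 0`.
-/

open Filter Real Topology

theorem le_rpow_pow_of_le_rpow_succ {N : ℕ → ℝ} {θ : ℝ} (hN : ∀ n, 0 ≤ N n) (hθ : 0 ≤ θ)
    (hrec : ∀ n, N n ≤ N (n + 1) ^ θ) (n : ℕ) : N 0 ≤ N n ^ θ ^ n := by
  induction n with
  | zero => simp
  | succ n ih =>
    calc N 0 ≤ N n ^ θ ^ n := ih
      _ ≤ (N (n + 1) ^ θ) ^ θ ^ n := rpow_le_rpow (hN n) (hrec n) (pow_nonneg hθ n)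
      _ = N (n + 1) ^ θ ^ (n + 1) := by rw [← rpow_mul (hN _), pow_succ']

theorem le_one_of_le_rpow_succ {N : ℕ → ℝ} {θ B : ℝ} (hN : ∀ n, 0 ≤ N n) (hθ0 : 0 ≤ θ)
    (hθ1 : θ < 1) (hB : ∀ n, N n ≤ B) (hrec : ∀ n, N n ≤ N (n + 1) ^ θ) : N 0 ≤ 1 := by
  have hB' : 0 < max B 1 := by positivity
  have hlim : Tendsto (fun n : ℕ ↦ max B 1 ^ θ ^ n) atTop (𝓝 1) := by
    simpa using tendsto_const_nhds.rpow (tendsto_pow_atTop_nhds_zero_of_lt_one hθ0 hθ1)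
      (Or.inl hB'.ne')
  refine ge_of_tendsto' hlim fun n ↦ ?_
  calc N 0 ≤ N n ^ θ ^ n := le_rpow_pow_of_le_rpow_succ hN hθ0 hrec n
    _ ≤ max B 1 ^ θ ^ n :=
      rpow_le_rpow (hN n) ((hB n).trans (le_max_left _ _)) (pow_nonneg hθ0 n)

theorem div_le_div_rpow_of_le_mul_rpow {m m' d d' k θ : ℝ} (hm' : 0 ≤ m') (hd' : 0 ≤ d')
    (hk : 0 < k) (hm : m ≤ k * m' ^ θ) (hd : d = k * d' ^ θ) : m / d ≤ (m' / d') ^ θ := by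
  rw [div_rpow hm' hd', ← mul_div_mul_left (m' ^ θ) _ hk.ne', ← hd]
  exact div_le_div_of_nonneg_right hm (hd ▸ by positivity)

noncomputable def equalitySeq (β c A : ℝ) (i : ℕ) : ℝ :=
  c ^ ((1 - β) / β ^ 2 + i / β) * A ^ (1 / β)

section equalitySeq

variable {β c A : ℝ}

theorem equalitySeq_pos (hc : 0 < c) (hA : 0 < A) (i : ℕ) : 0 < equalitySeq β c A i := by
  unfold equalitySeq; positivity

theorem equalitySeq_zero_le (hc : 1 ≤ c) (hβ : 0 < β) (hA : 0 ≤ A) (i : ℕ) :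
    equalitySeq β c A 0 ≤ equalitySeq β c A i := by
  unfold equalitySeq
  refine mul_le_mul_of_nonneg_right (rpow_le_rpow_of_exponent_le hc ?_) (rpow_nonneg hA _)
  simp only [Nat.cast_zero, zero_div, add_zero, le_add_iff_nonneg_right]
  positivity

theorem equalitySeq_eq (hβ : β ≠ 0) (hc : 0 < c) (hA : 0 < A) (i : ℕ) :
    equalitySeq β c A i = c ^ (i : ℝ) * A * equalitySeq β c A (i + 1) ^ (1 - β) := by
  have hAexp : 1 + 1 / β * (1 - β) = 1 / β := by field_simp; ring
  unfold equalitySeq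
  rw [mul_rpow (by positivity) (by positivity), ← rpow_mul hc.le, ← rpow_mul hA.le,
    mul_mul_mul_comm, ← rpow_add hc,
    ← rpow_one_add' hA.le (by rw [hAexp]; exact one_div_ne_zero hβ), hAexp]
  congr 2
  push_cast
  field_simp
  ring

end equalitySeq

/-- If 0 < β < 1, c > 1, A > 0 and a bounded nonnegative sequence
satisfies M_i ≤ c^i A M_{i+1}^{1-β}, then M₀ ≤ C A^{1/β} with C depending only
on c and β. -/
theorem stmt13 (β c : ℝ) (hβ0 : 0 < β) (hβ1 : β < 1) (hc : 1 < c) :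
    ∃ C : ℝ, 0 < C ∧ ∀ (A : ℝ) (M : ℕ → ℝ), 0 < A →
      (∀ i, 0 ≤ M i) →
      (∀ i : ℕ, M i ≤ c ^ (i : ℝ) * A * M (i + 1) ^ (1 - β)) →
      BddAbove (Set.range M) →
      M 0 ≤ C * A ^ (1 / β) := by
  have hc0 : 0 < c := one_pos.trans hc
  refine ⟨c ^ ((1 - β) / β ^ 2), by positivity, fun A M hA hM hrec ⟨B, hB⟩ ↦ ?_⟩
  set D := equalitySeq β c A
  have hD : ∀ i, 0 < D i := equalitySeq_pos hc0 hA
  have hN : ∀ i, M i / D i ≤ (M (i + 1) / D (i + 1)) ^ (1 - β) := fun i ↦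
    div_le_div_rpow_of_le_mul_rpow (hM _) (hD _).le (by positivity) (hrec i)
      (equalitySeq_eq hβ0.ne' hc0 hA i)
  have hNB : ∀ i, M i / D i ≤ B / D 0 := fun i ↦
    calc M i / D i ≤ B / D i := div_le_div_of_nonneg_right (hB ⟨i, rfl⟩) (hD i).le
      _ ≤ B / D 0 := div_le_div_of_nonneg_left ((hM i).trans (hB ⟨i, rfl⟩)) (hD 0)
          (equalitySeq_zero_le hc.le hβ0 hA.le i)
  have hN0 : M 0 / D 0 ≤ 1 :=
    le_one_of_le_rpow_succ (fun i ↦ div_nonneg (hM i) (hD i).le) (by linarith) (by linarith)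
      hNB hN
  calc M 0 ≤ D 0 := (div_le_one (hD 0)).mp hN0
    _ = c ^ ((1 - β) / β ^ 2) * A ^ (1 / β) := by simp [D, equalitySeq]
end
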